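/- Merle–Zaag type ODE lemma: suppose x, y, z : (−∞, 0] → [0,∞) are absolutely continuous and satisfy, for some ε > 0 and constants c_0 > 0, the differential inequalities x' ≥ c_0 x − ε(y + z), |y'| ≤ ε(x + y + z), z' ≤ −c_0 z + ε(x + y), and x + y + z → 0 as t → −∞. Then if ε is sufficiently small (depending on c_0), for t → −∞ either x + z ≤ Cε y (neutral mode dominates) or y + z ≤ Cε x (unstable mode dominates), for some constant C depending only on c_0. -/

import Mathlib

open Filter

open Set Real in
/-- Core comparison: if `c * f ≤ f'` on `[a,b]` then `f a * exp (c*(b-a)) ≤ f b`. -/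
lemma mz_core (f f' : ℝ → ℝ) (c a b : ℝ) (hab : a ≤ b)
    (hd : ∀ t ∈ Set.Icc a b, HasDerivAt f (f' t) t)
    (h : ∀ t ∈ Set.Icc a b, c * f t ≤ f' t) :
    f a * Real.exp (c * (b - a)) ≤ f b := by
  set F : ℝ → ℝ := fun t => f t * Real.exp (-(c * t)) with hF
  have hFd : ∀ t ∈ Set.Icc a b,
      HasDerivAt F ((f' t - c * f t) * Real.exp (-(c * t))) t := by
    intro t ht
    have he : HasDerivAt (fun s : ℝ => Real.exp (-(c * s)))
        (Real.exp (-(c * t)) * -(c * 1)) t :=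
      (((hasDerivAt_id t).const_mul c).neg).exp
    have : HasDerivAt F (f' t * Real.exp (-(c * t)) + f t * (Real.exp (-(c * t)) * -(c * 1))) t :=
      (hd t ht).fun_mul he
    convert this using 1
    ring
  have hmono : MonotoneOn F (Set.Icc a b) := by
    apply monotoneOn_of_deriv_nonneg (convex_Icc a b)
    · exact fun t ht => ((hFd t ht).continuousAt).continuousWithinAt
    · intro t ht
      rw [interior_Icc] at ht
      exact ((hFd t (Ioo_subset_Icc_self ht)).differentiableAt).differentiableWithinAt
    · intro t ht
      rw [interior_Icc] at ht
      rw [(hFd t (Ioo_subset_Icc_self ht)).deriv]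
      have h1 := h t (Ioo_subset_Icc_self ht)
      have h2 : 0 ≤ f' t - c * f t := by linarith
      positivity
  have hab' : F a ≤ F b := hmono (left_mem_Icc.2 hab) (right_mem_Icc.2 hab) hab
  have hE : (0:ℝ) < Real.exp (c * b) := Real.exp_pos _
  have this := mul_le_mul_of_nonneg_right hab' hE.le
  simp only [hF] at this
  rw [mul_assoc, mul_assoc, ← Real.exp_add, ← Real.exp_add] at this
  have e1 : -(c * a) + c * b = c * (b - a) := by ring
  have e2 : -(c * b) + c * b = 0 := by ring
  rw [e1, e2, Real.exp_zero, mul_one] at this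
  exact this

lemma mz_core' (f f' : ℝ → ℝ) (c a b : ℝ) (hab : a ≤ b)
    (hd : ∀ t ∈ Set.Icc a b, HasDerivAt f (f' t) t)
    (h : ∀ t ∈ Set.Icc a b, f' t ≤ c * f t) :
    f b ≤ f a * Real.exp (c * (b - a)) := by
  have := mz_core (fun t => -f t) (fun t => -f' t) c a b hab
    (fun t ht => (hd t ht).neg) (fun t ht => by have := h t ht; simp; linarith)
  simp only [neg_mul] at this
  linarith

lemma mz_nonneg (f f' : ℝ → ℝ) (c a b : ℝ) (hab : a ≤ b)
    (hd : ∀ t ∈ Set.Icc a b, HasDerivAt f (f' t) t)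
    (h : ∀ t ∈ Set.Icc a b, c * f t ≤ f' t) (ha : 0 ≤ f a) : 0 ≤ f b := by
  have := mz_core f f' c a b hab hd h
  have hE : (0:ℝ) < Real.exp (c * (b - a)) := Real.exp_pos _
  nlinarith

/-- If `f' ≤ c f` on `(-∞,0]` with `c ≤ 0` and `f → 0` at `-∞`, then `f ≤ 0`. -/
lemma mz_nonpos_atBot (f f' : ℝ → ℝ) (c : ℝ) (hc : c ≤ 0)
    (hd : ∀ t ≤ (0:ℝ), HasDerivAt f (f' t) t)
    (h : ∀ t ≤ (0:ℝ), f' t ≤ c * f t)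
    (h0 : Tendsto f atBot (nhds 0)) : ∀ s ≤ (0:ℝ), f s ≤ 0 := by
  intro s hs
  by_contra hpos
  push_neg at hpos
  have key : ∀ t ≤ s, f s ≤ f t := by
    intro t ht
    have hcore := mz_core' f f' c t s ht
      (fun r hr => hd r (hr.2.trans hs)) (fun r hr => h r (hr.2.trans hs))
    have hE1 : Real.exp (c * (s - t)) ≤ 1 :=
      Real.exp_le_one_iff.mpr (mul_nonpos_of_nonpos_of_nonneg hc (by linarith))
    have hE0 : (0:ℝ) < Real.exp (c * (s - t)) := Real.exp_pos _
    rcases le_or_gt (f t) 0 with h1 | h1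
    · nlinarith
    · nlinarith
  obtain ⟨t, ⟨hlt, ht⟩⟩ := ((h0.eventually_lt_const hpos).and (eventually_le_atBot s)).exists
  linarith [key t ht]

/-- Merle–Zaag type ODE lemma: if `x, y, z : (-∞,0] → [0,∞)` satisfy the
differential inequalities `x' ≥ c₀x - ε(y+z)`, `|y'| ≤ ε(x+y+z)`,
`z' ≤ -c₀z + ε(x+y)`, and `x + y + z → 0` as `t → -∞`, then for `ε` sufficiently
small (depending only on `c₀`) either the neutral mode dominates
(`x + z ≤ Cε y` as `t → -∞`) or the unstable mode dominates (`y + z ≤ Cε x` as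
`t → -∞`), where `C` depends only on `c₀`. -/
theorem merle_zaag_ode_lemma (c₀ : ℝ) (hc₀ : 0 < c₀) :
    ∃ ε₀ > 0, ∃ C > 0, ∀ ε : ℝ, 0 < ε → ε ≤ ε₀ →
      ∀ x y z x' y' z' : ℝ → ℝ,
        (∀ t ≤ (0 : ℝ), 0 ≤ x t ∧ 0 ≤ y t ∧ 0 ≤ z t) →
        (∀ t ≤ (0 : ℝ), HasDerivAt x (x' t) t ∧ HasDerivAt y (y' t) t ∧
          HasDerivAt z (z' t) t) →
        (∀ t ≤ (0 : ℝ), c₀ * x t - ε * (y t + z t) ≤ x' t) →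
        (∀ t ≤ (0 : ℝ), |y' t| ≤ ε * (x t + y t + z t)) →
        (∀ t ≤ (0 : ℝ), z' t ≤ -c₀ * z t + ε * (x t + y t)) →
        Tendsto (fun t => x t + y t + z t) atBot (nhds 0) →
        (∀ᶠ t in atBot, x t + z t ≤ C * ε * y t) ∨
          (∀ᶠ t in atBot, y t + z t ≤ C * ε * x t) := by
  refine ⟨min (c₀/16) 1, by positivity, 16/c₀ + 2, by positivity, ?_⟩
  intro ε hε hεε₀ x y z x' y' z' hpos hderiv hX hY hZ hlim
  have hεc : ε ≤ c₀/16 := hεε₀.trans (min_le_left _ _)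
  have hε1 : ε ≤ 1 := hεε₀.trans (min_le_right _ _)
  obtain ⟨u, hu0, huc, hu8, hCe⟩ :
      ∃ u : ℝ, 0 ≤ u ∧ c₀ * u = 2*ε ∧ u ≤ 1/8 ∧ (16/c₀ + 2)*ε = 8*u + 2*ε := by
    refine ⟨2*ε/c₀, by positivity, by field_simp, ?_, by field_simp; ring⟩
    rw [div_le_iff₀ hc₀]; linarith
  have huε : u*ε ≤ (1/8)*ε := mul_le_mul_of_nonneg_right hu8 hε.le
  have hu2ε : u^2*ε ≤ (1/64)*ε := by
    have h := mul_le_mul hu8 huε (by positivity) (by norm_num : (0:ℝ) ≤ 1/8)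
    calc u^2*ε = u*(u*ε) := by ring
      _ ≤ 1/8*(1/8*ε) := h
      _ = (1/64)*ε := by ring
  have hu2 : u^2 ≤ (1/8)*u := by
    have h := mul_le_mul_of_nonneg_right hu8 hu0
    calc u^2 = u*u := by ring
      _ ≤ 1/8*u := h
  have hxn : ∀ t ≤ (0:ℝ), 0 ≤ x t := fun t ht => (hpos t ht).1
  have hyn : ∀ t ≤ (0:ℝ), 0 ≤ y t := fun t ht => (hpos t ht).2.1
  have hzn : ∀ t ≤ (0:ℝ), 0 ≤ z t := fun t ht => (hpos t ht).2.2
  have hdx : ∀ t ≤ (0:ℝ), HasDerivAt x (x' t) t := fun t ht => (hderiv t ht).1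
  have hdy : ∀ t ≤ (0:ℝ), HasDerivAt y (y' t) t := fun t ht => (hderiv t ht).2.1
  have hdz : ∀ t ≤ (0:ℝ), HasDerivAt z (z' t) t := fun t ht => (hderiv t ht).2.2
  -- individual limits
  have hx0 : Tendsto x atBot (nhds 0) := by
    apply squeeze_zero' (Eventually.mono (eventually_le_atBot 0) ?_)
      (Eventually.mono (eventually_le_atBot 0) ?_) hlim
    · exact fun t ht => hxn t ht
    · exact fun t ht => by linarith [hyn t ht, hzn t ht]
  have hy0 : Tendsto y atBot (nhds 0) := by
    apply squeeze_zero' (Eventually.mono (eventually_le_atBot 0) ?_)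
      (Eventually.mono (eventually_le_atBot 0) ?_) hlim
    · exact fun t ht => hyn t ht
    · exact fun t ht => by linarith [hxn t ht, hzn t ht]
  have hz0 : Tendsto z atBot (nhds 0) := by
    apply squeeze_zero' (Eventually.mono (eventually_le_atBot 0) ?_)
      (Eventually.mono (eventually_le_atBot 0) ?_) hlim
    · exact fun t ht => hzn t ht
    · exact fun t ht => by linarith [hxn t ht, hyn t ht]
  -- Step 1: z ≤ u (x + y) everywhere on the ray
  have step1 : ∀ t ≤ (0:ℝ), z t ≤ u * (x t + y t) := by
    have key := mz_nonpos_atBot (fun t => z t - u*(x t + y t))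
      (fun t => z' t - u*(x' t + y' t)) (2*u*ε - c₀)
      (by linarith [huε, hεc, hε.le])
      (fun t ht => ((hdz t ht).sub (((hdx t ht).add (hdy t ht)).const_mul u)))
      ?_ ?_
    · intro t ht
      have h := key t ht
      linarith
    · intro t ht
      obtain ⟨hx', hy', hz'⟩ := hpos t ht
      have hyl := (abs_le.mp (hY t ht)).1
      have hXs : u*(c₀*x t - ε*(y t + z t)) ≤ u * x' t :=
        mul_le_mul_of_nonneg_left (hX t ht) hu0
      have hYs : u*(-(ε*(x t + y t + z t))) ≤ u * y' t :=
        mul_le_mul_of_nonneg_left hyl hu0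
      have hcx : 0 ≤ (3*ε - u*ε - 2*u^2*ε) * x t :=
        mul_nonneg (by linarith [huε, hu2ε, hε.le]) hx'
      have hcy : 0 ≤ (ε - 2*u*ε - 2*u^2*ε) * y t :=
        mul_nonneg (by linarith [huε, hu2ε, hε.le]) hy'
      have hux : c₀ * u * x t = 2*ε*x t := by rw [huc]
      have huy : c₀ * u * y t = 2*ε*y t := by rw [huc]
      show z' t - u*(x' t + y' t) ≤ (2*u*ε - c₀) * (z t - u*(x t + y t))
      linarith [hXs, hYs, hZ t ht, hcx, hcy, hux, huy]
    · have := (hz0.sub ((hx0.add hy0).const_mul u))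
      simpa using this
  by_cases hcase : ∀ᶠ t in atBot, x t < y t
  · -- Case B : neutral mode dominates
    left
    obtain ⟨T₀, hT₀⟩ := eventually_atBot.mp hcase
    obtain ⟨T, hT0, hTlt⟩ : ∃ T : ℝ, T ≤ 0 ∧ ∀ t ≤ T, x t < y t :=
      ⟨min T₀ 0, min_le_right _ _, fun t ht => hT₀ t (ht.trans (min_le_left _ _))⟩
    have hyT : 0 < y T := (hxn T hT0).trans_lt (hTlt T le_rfl)
    obtain ⟨D, hD0, hDxT⟩ : ∃ D : ℝ, 0 < D ∧ x T < D * Real.exp (c₀/2*T) := by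
      refine ⟨x T * Real.exp (-(c₀/2*T)) + 1,
        add_pos_of_nonneg_of_pos (mul_nonneg (hxn T hT0) (Real.exp_pos _).le) one_pos, ?_⟩
      have h1 : (x T * Real.exp (-(c₀/2*T)) + 1) * Real.exp (c₀/2*T)
          = x T + Real.exp (c₀/2*T) := by
        rw [add_mul, mul_assoc, ← Real.exp_add, one_mul]
        simp
      rw [h1]
      linarith [Real.exp_pos (c₀/2*T)]
    have hdf : ∀ t ≤ (0:ℝ), HasDerivAt (fun t => x t - 3*u*y t - D*Real.exp (c₀/2*t))
        (x' t - 3*u*y' t - D*(Real.exp (c₀/2*t)*(c₀/2))) t := by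
      intro t ht
      have he : HasDerivAt (fun s : ℝ => Real.exp (c₀/2*s))
          (Real.exp (c₀/2*t)*(c₀/2*1)) t := ((hasDerivAt_id t).const_mul (c₀/2)).exp
      simp only [mul_one] at he
      exact ((hdx t ht).sub ((hdy t ht).const_mul (3*u))).sub (he.const_mul D)
    have hfineq : ∀ t ≤ (0:ℝ), c₀/2 * (x t - 3*u*y t - D*Real.exp (c₀/2*t))
        ≤ x' t - 3*u*y' t - D*(Real.exp (c₀/2*t)*(c₀/2)) := by
      intro t ht
      obtain ⟨hx', hy', hz'⟩ := hpos t ht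
      have hyu := (abs_le.mp (hY t ht)).2
      have hεz : ε * z t ≤ ε*(u*(x t + y t)) :=
        mul_le_mul_of_nonneg_left (step1 t ht) hε.le
      have hYs : 3*u*y' t ≤ 3*u*(ε*(x t + y t + z t)) :=
        mul_le_mul_of_nonneg_left hyu (by positivity)
      have hZs : 3*u*(ε * z t) ≤ 3*u*(ε*(u*(x t + y t))) :=
        mul_le_mul_of_nonneg_left hεz (by positivity)
      have hcx : 0 ≤ (c₀/2 - 4*(u*ε) - 3*(u^2*ε)) * x t :=
        mul_nonneg (by linarith [huε, hu2ε, hεc, hε.le]) hx'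
      have hcy : 0 ≤ (2*ε - 4*(u*ε) - 3*(u^2*ε)) * y t :=
        mul_nonneg (by linarith [huε, hu2ε, hε.le]) hy'
      have huy : c₀ * u * y t = 2*ε*y t := by rw [huc]
      linarith [hX t ht, hYs, hZs, hεz, hcx, hcy, huy]
    have hfT : x T - 3*u*y T - D*Real.exp (c₀/2*T) < 0 := by
      have h2 : 0 ≤ 3*u*y T := by positivity
      linarith
    have hflt : ∀ t ≤ T, x t - 3*u*y t - D*Real.exp (c₀/2*t) < 0 := by
      intro t ht
      by_contra hge
      push_neg at hge
      have := mz_nonneg (fun t => x t - 3*u*y t - D*Real.exp (c₀/2*t))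
        (fun t => x' t - 3*u*y' t - D*(Real.exp (c₀/2*t)*(c₀/2))) (c₀/2) t T ht
        (fun r hr => hdf r (hr.2.trans hT0))
        (fun r hr => hfineq r (hr.2.trans hT0)) hge
      linarith
    -- lower bound on y going backwards
    have hylow : ∀ t ≤ T, y T ≤ y t * Real.exp (3*ε*(T - t)) := by
      intro t ht
      apply mz_core' y y' (3*ε) t T ht (fun r hr => hdy r (hr.2.trans hT0))
      intro r hr
      have hr0 : r ≤ (0:ℝ) := hr.2.trans hT0
      obtain ⟨hx', hy', hz'⟩ := hpos r hr0
      have hyu := (abs_le.mp (hY r hr0)).2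
      have hεz : ε * z r ≤ ε*(u*(x r + y r)) :=
        mul_le_mul_of_nonneg_left (step1 r hr0) hε.le
      have hxy : x r < y r := hTlt r hr.2
      have hεxy : ε * x r ≤ ε * y r := mul_le_mul_of_nonneg_left hxy.le hε.le
      have hεuxy : ε*(u * x r) ≤ ε*(u * y r) :=
        mul_le_mul_of_nonneg_left (mul_le_mul_of_nonneg_left hxy.le hu0) hε.le
      have hyc : 0 ≤ (1-2*u)*(ε*y r) := mul_nonneg (by linarith) (by positivity)
      linarith [hyu, hεz, hεxy, hεuxy, hyc]
    -- eventually the exponential tail is below ε y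
    have hlam : 0 < c₀/2 - 3*ε := by linarith
    have htendD : Tendsto (fun t => D * Real.exp ((c₀/2 - 3*ε)*t)) atBot (nhds 0) := by
      have h1 : Tendsto (fun t : ℝ => (c₀/2 - 3*ε)*t) atBot atBot :=
        Tendsto.const_mul_atBot hlam tendsto_id
      have h2 := Real.tendsto_exp_atBot.comp h1
      have := h2.const_mul D
      simpa [mul_comm] using this
    have hpos' : (0:ℝ) < ε * y T * Real.exp (-(3*ε*T)) := by positivity
    have hev := htendD.eventually_lt_const hpos'
    filter_upwards [hev, eventually_le_atBot T] with t hlt' htT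
    have ht0 : t ≤ (0:ℝ) := htT.trans hT0
    obtain ⟨hx', hy', hz'⟩ := hpos t ht0
    -- D e^{(c₀/2) t} ≤ ε y t
    have hkey : D * Real.exp (c₀/2*t) ≤ ε * y t := by
      have hyl := hylow t htT
      have hE3 : (0:ℝ) < Real.exp (3*ε*t) := Real.exp_pos _
      have e1 : Real.exp ((c₀/2 - 3*ε)*t) * Real.exp (3*ε*t) = Real.exp (c₀/2*t) := by
        rw [← Real.exp_add]; ring_nf
      have e2 : Real.exp (3*ε*(T-t)) * Real.exp (-(3*ε*T)) * Real.exp (3*ε*t) = 1 := by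
        rw [← Real.exp_add, ← Real.exp_add, ← Real.exp_zero]; ring_nf
      have h3 : D * Real.exp ((c₀/2 - 3*ε)*t) * Real.exp (3*ε*t)
          ≤ ε * y T * Real.exp (-(3*ε*T)) * Real.exp (3*ε*t) :=
        mul_le_mul_of_nonneg_right hlt'.le hE3.le
      have h4 : ε * y T * (Real.exp (-(3*ε*T)) * Real.exp (3*ε*t))
          ≤ ε * (y t * Real.exp (3*ε*(T-t))) * (Real.exp (-(3*ε*T)) * Real.exp (3*ε*t)) := by
        apply mul_le_mul_of_nonneg_right _ (by positivity)
        exact mul_le_mul_of_nonneg_left hyl hε.le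
      calc D * Real.exp (c₀/2*t)
          = D * Real.exp ((c₀/2 - 3*ε)*t) * Real.exp (3*ε*t) := by rw [mul_assoc, e1]
        _ ≤ ε * y T * Real.exp (-(3*ε*T)) * Real.exp (3*ε*t) := h3
        _ = ε * y T * (Real.exp (-(3*ε*T)) * Real.exp (3*ε*t)) := by ring
        _ ≤ ε * (y t * Real.exp (3*ε*(T-t))) * (Real.exp (-(3*ε*T)) * Real.exp (3*ε*t)) := h4
        _ = ε * y t * (Real.exp (3*ε*(T-t)) * Real.exp (-(3*ε*T)) * Real.exp (3*ε*t)) := by ring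
        _ = ε * y t := by rw [e2, mul_one]
    have hxb : x t ≤ 3*u*y t + ε * y t := by
      have h := hflt t htT
      linarith
    have hzb : z t ≤ u*(x t + y t) := step1 t ht0
    have huxb : u * x t ≤ u * (3*u*y t + ε * y t) := mul_le_mul_of_nonneg_left hxb hu0
    have hcoef : 0 ≤ (4*u + ε - 3*u^2 - u*ε) * y t := by
      apply mul_nonneg _ hy'
      linarith [hu2, huε, hu0, hε.le]
    rw [hCe]
    linarith [hxb, hzb, huxb, hcoef]
  · -- Case A : unstable mode dominates
    right
    have hfreq : ∃ᶠ t in atBot, y t ≤ x t :=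
      (Filter.not_eventually.mp hcase).mono (fun t h => not_lt.mp h)
    have hxy : ∀ t ≤ (0:ℝ), y t ≤ x t := by
      intro t ht
      obtain ⟨s, hs_le, hs⟩ := frequently_atBot.mp hfreq t
      have key := mz_nonneg (fun r => x r - y r) (fun r => x' r - y' r) (2*ε+2*(u*ε)) s t hs_le
        (fun r hr => ((hdx r (hr.2.trans ht)).sub (hdy r (hr.2.trans ht)))) ?_ (by simp; linarith)
      · linarith
      · intro r hr
        have hr0 : r ≤ (0:ℝ) := hr.2.trans ht
        obtain ⟨hx', hy', hz'⟩ := hpos r hr0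
        have hyu := (abs_le.mp (hY r hr0)).2
        have hεz : 2*ε * z r ≤ 2*ε*(u*(x r + y r)) :=
          mul_le_mul_of_nonneg_left (step1 r hr0) (by positivity)
        have hcx : 0 ≤ (c₀ - 3*ε - 4*(u*ε)) * x r :=
          mul_nonneg (by linarith [huε, hεc, hε.le]) hx'
        show (2*ε+2*(u*ε)) * (x r - y r) ≤ x' r - y' r
        linarith [hX r hr0, hyu, hεz, hcx]
    -- y ≤ 4u x everywhere
    have hφ : ∀ t ≤ (0:ℝ), y t - 4*u*x t ≤ 0 := by
      apply mz_nonpos_atBot (fun t => y t - 4*u*x t) (fun t => y' t - 4*u*x' t) (-(3*ε))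
        (by linarith)
        (fun t ht => ((hdy t ht).sub ((hdx t ht).const_mul (4*u))))
      · intro t ht
        obtain ⟨hx', hy', hz'⟩ := hpos t ht
        have hyu := (abs_le.mp (hY t ht)).2
        have hXs : 4*u*(c₀*x t - ε*(y t + z t)) ≤ 4*u * x' t :=
          mul_le_mul_of_nonneg_left (hX t ht) (by positivity)
        have hux : c₀ * u * x t = 2*ε*x t := by rw [huc]
        have hεz : ε * z t ≤ ε*(u*(x t + y t)) :=
          mul_le_mul_of_nonneg_left (step1 t ht) hε.le
        have huεz : 4*u*(ε * z t) ≤ 4*u*(ε*(u*(x t + y t))) :=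
          mul_le_mul_of_nonneg_left hεz (by positivity)
        have hεxy : ε * y t ≤ ε * x t := mul_le_mul_of_nonneg_left (hxy t ht) hε.le
        have hεuxy : ε*(u * y t) ≤ ε*(u * x t) :=
          mul_le_mul_of_nonneg_left (mul_le_mul_of_nonneg_left (hxy t ht) hu0) hε.le
        have hu2xy : u^2*(ε*y t) ≤ u^2*(ε*x t) :=
          mul_le_mul_of_nonneg_left (mul_le_mul_of_nonneg_left (hxy t ht) hε.le)
            (by positivity)
        have hcx : 0 ≤ (3*ε - 10*(u*ε) - 8*(u^2*ε)) * x t :=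
          mul_nonneg (by linarith [huε, hu2ε, hε.le]) hx'
        have huεx : 0 ≤ u*(ε*x t) := by positivity
        show y' t - 4*u*x' t ≤ -(3*ε) * (y t - 4*u*x t)
        linarith [hyu, hXs, hux, hεz, huεz, hεxy, hεuxy, hu2xy, hcx, huεx]
      · have := (hy0.sub (hx0.const_mul (4*u)))
        simpa using this
    filter_upwards [eventually_le_atBot 0] with t ht
    obtain ⟨hx', hy', hz'⟩ := hpos t ht
    have h1 : y t ≤ 4*u*x t := by have h := hφ t ht; linarith
    have h2 : z t ≤ u*(x t + y t) := step1 t ht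
    have huy : u * y t ≤ u * (4*u*x t) := mul_le_mul_of_nonneg_left h1 hu0
    have hcoef : 0 ≤ (3*u + 2*ε - 4*u^2) * x t := by
      apply mul_nonneg _ hx'
      linarith [hu2, hu0, hε.le]
    rw [hCe]
    linarith [h1, h2, huy, hcoef]
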